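/- Interlacing of zeros: with uniform monomer activity x and strictly positive dimer weights w_{ij} > 0 on the complete graph with N vertices, writing the zeros of Z_G as −i·a_1, …, −i·a_N and the zeros of Z_{G−v} (for any fixed vertex v) as −i·a'_1, …, −i·a'_{N−1} with a_k, a'_k real, the zeros strictly interlace: a_1 < a'_1 < a_2 < a'_2 < ⋯ < a'_{N−1} < a_N. -/

import Mathlib

open scoped BigOperators
open MeasureTheory Filter Finset

attribute [local instance] Classical.propDecidable

noncomputable section

variable {V : Type*} [Fintype V] [DecidableEq V]

/-- `D` is a monomer-dimer configuration (matching) within the edge set `E`. -/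
def IsMatchingIn (E D : Finset (Sym2 V)) : Prop :=
  D ⊆ E ∧ (∀ e ∈ D, ¬ e.IsDiag) ∧
    ∀ e ∈ D, ∀ f ∈ D, e ≠ f → ∀ v : V, ¬(v ∈ e ∧ v ∈ f)

/-- All matchings of the edge set `E`. -/
def matchingsIn (E : Finset (Sym2 V)) : Finset (Finset (Sym2 V)) :=
  E.powerset.filter (fun D => IsMatchingIn E D)

/-- `M(D)`: the set of vertices not covered by the matching `D` (the monomers). -/
def uncovered (D : Finset (Sym2 V)) : Finset V :=
  Finset.univ.filter (fun v => ∀ e ∈ D, v ∉ e)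

/-- `x_i * x_j` for the edge `e = {i,j}`. -/
def edgeProd (x : V → ℝ) : Sym2 V → ℝ :=
  Sym2.lift ⟨fun a b => x a * x b, fun a b => mul_comm _ _⟩

/-- The monomer-dimer partition function with dimer activities `w` and monomer
activities `x` on the graph with edge set `E`. -/
def partFun (E : Finset (Sym2 V)) (w : Sym2 V → ℝ) (x : V → ℝ) : ℝ :=
  ∑ D ∈ matchingsIn E, (∏ e ∈ D, w e) * ∏ i ∈ uncovered D, x i

/-- The edge set of the complete graph on `V`. -/
def completeEdges (V : Type*) [Fintype V] [DecidableEq V] : Finset (Sym2 V) :=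
  Finset.univ.filter (fun e : Sym2 V => ¬ e.IsDiag)

/-- Matching polynomial of the induced subgraph of the complete graph on the
vertex subset `S`, with dimer weights `w` and complex monomer variable. -/
def matchPolyS (S : Finset V) (w : Sym2 V → ℝ) : Polynomial ℂ :=
  ∑ D ∈ matchingsIn ((completeEdges V).filter (fun e => ∀ v ∈ e, v ∈ S)),
    Polynomial.C (∏ e ∈ D, (w e : ℂ)) * Polynomial.X ^ (S.card - 2 * D.card)

/-!
Substituting `x = -i t` turns `Z_{K_S}` into `(-i)^{|S|} q_S(t)` with the real monic polynomial
`q_S(t) = ∑_D (-1)^{|D|} w(D) t^{|S| - 2|D|}`, and expanding over the partner of `v` gives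
`q_S = t q_{S-v} - ∑_u w_{uv} q_{S-u-v}`. By strong induction on `|S|`, `q_S` has `|S|` simple
real roots, strictly interlaced by those of `q_{S-v}`: at the `k`-th root of `q_{S-v}` every
`q_{S-u-v}` has sign `(-1)^{|S|-2-k}` (interlacing for `S - v`), so, as `w_{uv} > 0`, `q_S` has
sign `(-1)^{|S|-1-k}` there. With the signs of `q_S` at `±∞`, the intermediate value theorem puts
one root of `q_S` in each of the `|S|` gaps, and there are no others.
-/

open Polynomial

section SortedNth

variable {α : Type*} [LinearOrder α] [Inhabited α]

/-- The `k`-th smallest element of `s` (from `k = 0`, with multiplicity); `default` once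
`k ≥ card s`. -/
def sortedNth (s : Multiset α) (k : ℕ) : α := (s.sort (· ≤ ·)).getD k default

theorem sortedNth_le_sortedNth {s : Multiset α} {j k : ℕ} (hjk : j ≤ k)
    (hk : k < Multiset.card s) : sortedNth s j ≤ sortedNth s k := by
  have hk' : k < (s.sort (· ≤ ·)).length := by rwa [Multiset.length_sort]
  rw [sortedNth, sortedNth, List.getD_eq_getElem _ _ hk',
    List.getD_eq_getElem _ _ (hjk.trans_lt hk')]
  exact (Multiset.pairwise_sort s (· ≤ ·)).rel_get_of_le (a := ⟨j, _⟩) (b := ⟨k, hk'⟩) hjk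

theorem sortedNth_mem {s : Multiset α} {k : ℕ} (hk : k < Multiset.card s) : sortedNth s k ∈ s := by
  have hk' : k < (s.sort (· ≤ ·)).length := by rwa [Multiset.length_sort]
  rw [sortedNth, List.getD_eq_getElem _ _ hk']
  exact (Multiset.mem_sort _).1 (List.getElem_mem hk')

theorem map_sortedNth_range (s : Multiset α) :
    (Finset.range (Multiset.card s)).val.map (sortedNth s) = s := by
  conv_rhs => rw [← Multiset.sort_eq s (· ≤ ·)]
  rw [Finset.range_val, Multiset.range, Multiset.map_coe, Multiset.coe_eq_coe]
  refine List.Perm.of_eq (List.ext_getElem (by simp) fun i h₁ h₂ => ?_)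
  rw [List.getElem_map, List.getElem_range, sortedNth, List.getD_eq_getElem]

theorem sortedNth_map_range {x : ℕ → α} {n : ℕ} (hx : MonotoneOn x (Set.Iio n)) {k : ℕ}
    (hk : k < n) : sortedNth ((Finset.range n).val.map x) k = x k := by
  have hsorted : ((List.range n).map x).Pairwise (· ≤ ·) := by
    refine List.pairwise_iff_get.2 fun i j hij => ?_
    simp only [List.get_eq_getElem, List.getElem_map, List.getElem_range]
    have hj := j.isLt
    simp only [List.length_map, List.length_range] at hj
    exact hx (Set.mem_Iio.2 (by omega)) (Set.mem_Iio.2 hj) hij.le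
  have hsort : ((Finset.range n).val.map x).sort (· ≤ ·) = (List.range n).map x :=
    List.Perm.eq_of_pairwise' (Multiset.pairwise_sort _ _) hsorted
      (Multiset.coe_eq_coe.1 (by rw [Multiset.sort_eq]; rfl))
  rw [sortedNth, hsort, List.getD_eq_getElem _ _ (by simpa using hk)]
  simp

end SortedNth

section RealPolynomial

theorem eval_eq_prod_range_sub_sortedNth {p : ℝ[X]} (hp : p.Monic)
    (hroots : Multiset.card p.roots = p.natDegree) (t : ℝ) :
    p.eval t = ∏ i ∈ Finset.range p.natDegree, (t - sortedNth p.roots i) := by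
  conv_lhs => rw [← prod_multiset_X_sub_C_of_monic_of_roots_card_eq hp hroots,
    ← map_sortedNth_range p.roots, hroots]
  rw [Multiset.map_map, eval_multiset_prod, Multiset.map_map, Finset.prod_eq_multiset_prod]
  simp [Function.comp_def]

theorem neg_one_pow_mul_prod_sub_pos {c : ℕ → ℝ} {t : ℝ} {j : ℕ} (m : ℕ)
    (hlt : ∀ i < m, i < j → c i < t) (hgt : ∀ i < m, j ≤ i → t < c i) :
    0 < (-1) ^ (m - j) * ∏ i ∈ Finset.range m, (t - c i) := by
  induction m with
  | zero => simp
  | succ m ih =>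
    have ih := ih (fun i hi => hlt i (by omega)) (fun i hi => hgt i (by omega))
    rw [Finset.prod_range_succ]
    rcases lt_or_ge m j with hmj | hjm
    · have := hlt m m.lt_succ_self hmj
      rw [show m + 1 - j = m - j by omega]
      nlinarith
    · have := hgt m m.lt_succ_self hjm
      rw [show m + 1 - j = m - j + 1 by omega, pow_succ]
      nlinarith

theorem neg_one_pow_mul_eval_pos_of_interlace {p : ℝ[X]} {b : ℕ → ℝ} (hp : p.Monic)
    (hroots : Multiset.card p.roots = p.natDegree) (hb : MonotoneOn b (Set.Iic p.natDegree))
    (hint : ∀ i < p.natDegree, b i < sortedNth p.roots i ∧ sortedNth p.roots i < b (i + 1))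
    {j : ℕ} (hj : j ≤ p.natDegree) : 0 < (-1) ^ (p.natDegree - j) * p.eval (b j) := by
  rw [eval_eq_prod_range_sub_sortedNth hp hroots]
  refine neg_one_pow_mul_prod_sub_pos _ (fun i hi hij => ?_) fun i hi hji => ?_
  · exact (hint i hi).2.trans_le (hb (Set.mem_Iic.2 (by omega)) (Set.mem_Iic.2 hj) hij)
  · exact (hb (Set.mem_Iic.2 hj) (Set.mem_Iic.2 hi.le) hji).trans_lt (hint i hi).1

theorem exists_roots_eq_of_neg_one_pow_mul_eval_pos {p : ℝ[X]} {n : ℕ} (hdeg : p.natDegree ≤ n)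
    {β : ℕ → ℝ} (hβ : ∀ j < n, β j < β (j + 1))
    (hsign : ∀ j ≤ n, 0 < (-1) ^ (n - j) * p.eval (β j)) :
    ∃ x : ℕ → ℝ, StrictMonoOn x (Set.Iio n) ∧ (∀ j < n, β j < x j ∧ x j < β (j + 1)) ∧
      p.roots = (Finset.range n).val.map x := by
  have hgap : ∀ j < n, ∃ y, (β j < y ∧ y < β (j + 1)) ∧ p.IsRoot y := by
    intro j hj
    have hleft : (-1) ^ (n - (j + 1)) * p.eval (β j) < 0 := by
      have := hsign j hj.le
      rw [show n - j = n - (j + 1) + 1 by omega, pow_succ] at this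
      linarith
    obtain ⟨y, hy, hy0⟩ := intermediate_value_Ioo (hβ j hj).le
      (continuous_const.mul p.continuous).continuousOn ⟨hleft, hsign (j + 1) hj⟩
    exact ⟨y, hy, by simpa using hy0⟩
  choose! x hx hxroot using hgap
  have hxmono : StrictMonoOn x (Set.Iio n) :=
    strictMonoOn_of_lt_succ Set.ordConnected_Iio fun j _ hj hj₁ =>
      (hx j hj).2.trans (hx (j + 1) (by simpa using hj₁)).1
  refine ⟨x, hxmono, hx, ?_⟩
  have hnodup : ((Finset.range n).val.map x).Nodup :=
    (Finset.range n).nodup.map_on fun i hi j hj hij =>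
      hxmono.injOn (by simpa using hi) (by simpa using hj) hij
  have hp0 : p ≠ 0 := fun h => by simpa [h] using hsign 0 n.zero_le
  refine (Multiset.eq_of_le_of_card_le ((Multiset.le_iff_subset hnodup).2 fun y hy => ?_)
    ?_).symm
  · obtain ⟨j, hj, rfl⟩ := Multiset.mem_map.1 hy
    exact (mem_roots hp0).2 (hxroot j (by simpa using hj))
  · simpa using p.card_roots'.trans hdeg

theorem exists_roots_interlacing {p : ℝ[X]} {n : ℕ} (hdeg : p.natDegree ≤ n + 1) {b : ℕ → ℝ}
    (hb : ∀ j, j + 1 < n → b j < b (j + 1))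
    (hsign : ∀ j < n, 0 < (-1) ^ (n - j) * p.eval (b j))
    {L : ℝ} (hL : 0 < L) (hbL : ∀ j < n, |b j| < L)
    (htop : 0 < p.eval L) (hbot : 0 < (-1) ^ (n + 1) * p.eval (-L)) :
    ∃ x : ℕ → ℝ, StrictMonoOn x (Set.Iio (n + 1)) ∧ (∀ k < n, x k < b k ∧ b k < x (k + 1)) ∧
      p.roots = (Finset.range (n + 1)).val.map x := by
  -- The sentinels `∓L` lie beyond every `b j` and play the role of `∓∞`.
  set β : ℕ → ℝ := fun j => if j = 0 then -L else if j ≤ n then b (j - 1) else L with hβdef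
  have hβ₀ : β 0 = -L := by simp [hβdef]
  have hβ : ∀ j, 0 < j → j ≤ n → β j = b (j - 1) := fun j h₀ h => by simp [hβdef, h₀.ne', h]
  have hβₙ : β (n + 1) = L := by simp [hβdef]
  have hβmono : ∀ j < n + 1, β j < β (j + 1) := by
    intro j hj
    obtain hj₁ | hj₁ := (show j ≤ n by omega).lt_or_eq <;>
      obtain rfl | hj₀ := Nat.eq_zero_or_pos j
    · rw [hβ₀, hβ 1 one_pos hj₁]
      exact (abs_lt.1 (hbL 0 hj₁)).1
    · rw [hβ j hj₀ hj₁.le, hβ (j + 1) j.succ_pos hj₁, Nat.add_sub_cancel]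
      exact Nat.sub_add_cancel hj₀ ▸ hb (j - 1) (by omega)
    · subst hj₁
      rw [hβ₀, hβₙ]
      linarith
    · rw [hβ j hj₀ hj₁.le, hj₁, hβₙ]
      exact (abs_lt.1 (hbL (n - 1) (by omega))).2
  have hβsign : ∀ j ≤ n + 1, 0 < (-1) ^ (n + 1 - j) * p.eval (β j) := by
    intro j hj
    obtain rfl | hj₀ := Nat.eq_zero_or_pos j
    · rwa [hβ₀]
    obtain hjn | rfl := hj.lt_or_eq
    · rw [hβ j hj₀ (by omega), show n + 1 - j = n - (j - 1) by omega]
      exact hsign (j - 1) (by omega)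
    · rwa [hβₙ, Nat.sub_self, pow_zero, one_mul]
  obtain ⟨x, hxmono, hx, hroots⟩ :=
    exists_roots_eq_of_neg_one_pow_mul_eval_pos hdeg hβmono hβsign
  refine ⟨x, hxmono, fun k hk => ?_, hroots⟩
  rw [← Nat.add_sub_cancel k 1, ← hβ (k + 1) k.succ_pos hk]
  exact ⟨(hx k (by omega)).2, (hx (k + 1) (by omega)).1⟩

end RealPolynomial

section Matchings

def completeEdgesOn (S : Finset V) : Finset (Sym2 V) :=
  (completeEdges V).filter (fun e => ∀ x ∈ e, x ∈ S)

theorem mem_completeEdgesOn {S : Finset V} {e : Sym2 V} :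
    e ∈ completeEdgesOn S ↔ ¬ e.IsDiag ∧ ∀ x ∈ e, x ∈ S := by
  simp [completeEdgesOn, completeEdges]

theorem completeEdgesOn_mono {S T : Finset V} (h : S ⊆ T) :
    completeEdgesOn S ⊆ completeEdgesOn T := fun _ he =>
  mem_completeEdgesOn.2
    ⟨(mem_completeEdgesOn.1 he).1, fun x hx => h ((mem_completeEdgesOn.1 he).2 x hx)⟩

omit [Fintype V] [DecidableEq V] in
theorem mem_matchingsIn {E D : Finset (Sym2 V)} : D ∈ matchingsIn E ↔ IsMatchingIn E D := by
  simp only [matchingsIn, Finset.mem_filter, Finset.mem_powerset]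
  exact ⟨And.right, fun h => ⟨h.1, h⟩⟩

omit [Fintype V] [DecidableEq V] in
theorem IsMatchingIn.mono {E E' D : Finset (Sym2 V)} (h : IsMatchingIn E D) (hD : D ⊆ E') :
    IsMatchingIn E' D :=
  ⟨hD, h.2⟩

omit [Fintype V] [DecidableEq V] in
theorem empty_mem_matchingsIn (E : Finset (Sym2 V)) : ∅ ∈ matchingsIn E :=
  mem_matchingsIn.2 ⟨Finset.empty_subset _, by simp, by simp⟩

theorem IsMatchingIn.two_mul_card_le {S : Finset V} {D : Finset (Sym2 V)}
    (h : IsMatchingIn (completeEdgesOn S) D) : 2 * D.card ≤ S.card := by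
  obtain ⟨hsub, hdiag, hdisj⟩ := h
  calc 2 * D.card = ∑ e ∈ D, e.toFinset.card := by
        rw [Finset.sum_congr rfl fun e he => Sym2.card_toFinset_of_not_isDiag e (hdiag e he),
          Finset.sum_const, smul_eq_mul, mul_comm]
    _ = (D.biUnion Sym2.toFinset).card :=
        (Finset.card_biUnion fun e he f hf hne => Finset.disjoint_left.2 fun x hxe hxf =>
          hdisj e he f hf hne x ⟨Sym2.mem_toFinset.1 hxe, Sym2.mem_toFinset.1 hxf⟩).symm
    _ ≤ S.card := Finset.card_le_card <| Finset.biUnion_subset.2 fun e he x hx =>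
        (mem_completeEdgesOn.1 (hsub he)).2 x (Sym2.mem_toFinset.1 hx)

theorem filter_matchingsIn_avoiding (S : Finset V) (v : V) :
    (matchingsIn (completeEdgesOn S)).filter (fun D => ∀ e ∈ D, v ∉ e) =
      matchingsIn (completeEdgesOn (S.erase v)) := by
  ext D
  simp only [Finset.mem_filter, mem_matchingsIn]
  constructor
  · rintro ⟨h, hv⟩
    refine h.mono fun e he => mem_completeEdgesOn.2 ⟨(mem_completeEdgesOn.1 (h.1 he)).1,
      fun x hx => Finset.mem_erase.2 ⟨?_, (mem_completeEdgesOn.1 (h.1 he)).2 x hx⟩⟩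
    rintro rfl
    exact hv e he hx
  · intro h
    exact ⟨h.mono (h.1.trans (completeEdgesOn_mono (S.erase_subset v))), fun e he hv =>
      S.notMem_erase v ((mem_completeEdgesOn.1 (h.1 he)).2 v hv)⟩

theorem filter_matchingsIn_covering (S : Finset V) (v : V) :
    (matchingsIn (completeEdgesOn S)).filter (fun D => ¬ ∀ e ∈ D, v ∉ e) =
      (S.erase v).biUnion fun u => (matchingsIn (completeEdgesOn S)).filter (s(u, v) ∈ ·) := by
  ext D
  simp only [Finset.mem_filter, Finset.mem_biUnion, not_forall, not_not]
  constructor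
  · rintro ⟨hD, e, he, hve⟩
    obtain ⟨u, rfl⟩ := Sym2.mem_iff_exists.1 hve
    have heS := mem_completeEdgesOn.1 ((mem_matchingsIn.1 hD).1 he)
    refine ⟨u, Finset.mem_erase.2 ⟨?_, heS.2 u (by simp)⟩, hD, by rwa [Sym2.eq_swap]⟩
    rintro rfl
    exact heS.1 (Sym2.mk_isDiag_iff.2 rfl)
  · rintro ⟨u, -, hD, he⟩
    exact ⟨hD, _, he, Sym2.mem_mk_right u v⟩

theorem insert_mem_matchingsIn_iff {S : Finset V} {u v : V} (huv : u ≠ v) (hu : u ∈ S)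
    (hv : v ∈ S) {D : Finset (Sym2 V)} (hD : s(u, v) ∉ D) :
    insert s(u, v) D ∈ matchingsIn (completeEdgesOn S) ↔
      D ∈ matchingsIn (completeEdgesOn ((S.erase v).erase u)) := by
  simp only [mem_matchingsIn, IsMatchingIn, Finset.forall_mem_insert, Finset.subset_iff,
    mem_completeEdgesOn, Finset.mem_erase, Sym2.mem_iff, Sym2.mk_isDiag_iff]
  grind

end Matchings

section SignedMatchPoly

variable (w : Sym2 V → ℝ)

def signedMatchPoly (S : Finset V) : ℝ[X] :=
  ∑ D ∈ matchingsIn (completeEdgesOn S),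
    C ((-1) ^ D.card * ∏ e ∈ D, w e) * X ^ (S.card - 2 * D.card)

theorem signedMatchPoly_eq_X_pow_add (S : Finset V) :
    ∃ r : ℝ[X], r.degree < S.card ∧ signedMatchPoly w S = X ^ S.card + r := by
  refine ⟨∑ D ∈ (matchingsIn (completeEdgesOn S)).erase ∅,
    C ((-1) ^ D.card * ∏ e ∈ D, w e) * X ^ (S.card - 2 * D.card), ?_, ?_⟩
  · refine (degree_sum_le _ _).trans_lt
      ((Finset.sup_lt_iff (WithBot.bot_lt_coe _)).2 fun D hD => ?_)
    obtain ⟨hne, hD⟩ := Finset.mem_erase.1 hD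
    have h2 := (mem_matchingsIn.1 hD).two_mul_card_le
    have h1 := Finset.card_pos.2 (Finset.nonempty_iff_ne_empty.2 hne)
    exact (degree_C_mul_X_pow_le _ _).trans_lt (by exact_mod_cast (by omega))
  · rw [signedMatchPoly, ← Finset.add_sum_erase _ _ (empty_mem_matchingsIn _)]
    simp

theorem signedMatchPoly_monic (S : Finset V) : (signedMatchPoly w S).Monic := by
  obtain ⟨r, hr, h⟩ := signedMatchPoly_eq_X_pow_add w S
  exact h ▸ monic_X_pow_add hr

theorem natDegree_signedMatchPoly (S : Finset V) : (signedMatchPoly w S).natDegree = S.card := by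
  obtain ⟨r, hr, h⟩ := signedMatchPoly_eq_X_pow_add w S
  rw [h, natDegree_add_eq_left_of_degree_lt (by rwa [degree_X_pow]), natDegree_X_pow]

theorem eval_neg_signedMatchPoly (S : Finset V) (t : ℝ) :
    (signedMatchPoly w S).eval (-t) = (-1) ^ S.card * (signedMatchPoly w S).eval t := by
  simp only [signedMatchPoly, eval_finsetSum, eval_mul, eval_C, eval_pow, eval_X,
    Finset.mul_sum]
  refine Finset.sum_congr rfl fun D hD => ?_
  obtain ⟨r, hr⟩ : ∃ r, S.card = r + 2 * D.card :=
    ⟨_, (Nat.sub_add_cancel (mem_matchingsIn.1 hD).two_mul_card_le).symm⟩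
  rw [hr, Nat.add_sub_cancel, neg_pow, pow_add, pow_mul]
  ring

theorem sum_matchingsIn_through_edge {S : Finset V} {u v : V} (hv : v ∈ S)
    (hu : u ∈ S.erase v) :
    ∑ D ∈ (matchingsIn (completeEdgesOn S)).filter (s(u, v) ∈ ·),
        C ((-1) ^ D.card * ∏ e ∈ D, w e) * X ^ (S.card - 2 * D.card) =
      -(C (w s(u, v)) * signedMatchPoly w ((S.erase v).erase u)) := by
  obtain ⟨huv, huS⟩ := Finset.mem_erase.1 hu
  have hcard₁ := Finset.card_erase_add_one hu
  have hcard₂ := Finset.card_erase_add_one hv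
  have hnotMem : ∀ D ∈ matchingsIn (completeEdgesOn ((S.erase v).erase u)), s(u, v) ∉ D :=
    fun D hD he => by
      simpa using (mem_completeEdgesOn.1 ((mem_matchingsIn.1 hD).1 he)).2 u (Sym2.mem_mk_left u v)
  rw [signedMatchPoly, Finset.mul_sum, ← Finset.sum_neg_distrib]
  refine Finset.sum_nbij' (·.erase s(u, v)) (insert s(u, v)) (fun D hD => ?_) (fun D hD => ?_)
    (fun D hD => Finset.insert_erase (Finset.mem_filter.1 hD).2)
    (fun D hD => Finset.erase_insert (hnotMem D hD)) fun D hD => ?_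
  · obtain ⟨hD, he⟩ := Finset.mem_filter.1 hD
    refine (insert_mem_matchingsIn_iff huv huS hv (Finset.notMem_erase _ _)).1 ?_
    rwa [Finset.insert_erase he]
  · exact Finset.mem_filter.2 ⟨(insert_mem_matchingsIn_iff huv huS hv (hnotMem D hD)).2 hD,
      Finset.mem_insert_self _ _⟩
  · obtain ⟨hD, he⟩ := Finset.mem_filter.1 hD
    have h2 := (mem_matchingsIn.1 hD).two_mul_card_le
    have hk := Finset.card_erase_add_one he
    rw [← Finset.mul_prod_erase D w he, ← hk,
      show S.card - 2 * ((D.erase s(u, v)).card + 1) = ((S.erase v).erase u).card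
        - 2 * (D.erase s(u, v)).card by omega]
    simp only [map_mul, map_neg, map_pow, map_one]
    ring

theorem signedMatchPoly_eq_X_mul_sub_sum {S : Finset V} {v : V} (hv : v ∈ S) :
    signedMatchPoly w S = X * signedMatchPoly w (S.erase v) -
      ∑ u ∈ S.erase v, C (w s(u, v)) * signedMatchPoly w ((S.erase v).erase u) := by
  have hdisj : (S.erase v : Set V).PairwiseDisjoint
      fun u => (matchingsIn (completeEdgesOn S)).filter (s(u, v) ∈ ·) := by
    intro u hu u' hu' hne
    refine Finset.disjoint_left.2 fun D hD hD' => hne ?_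
    obtain ⟨hD, he⟩ := Finset.mem_filter.1 hD
    have hsame : s(u, v) = s(u', v) := by
      by_contra h
      exact (mem_matchingsIn.1 hD).2.2 _ he _ (Finset.mem_filter.1 hD').2 h v
        ⟨Sym2.mem_mk_right u v, Sym2.mem_mk_right u' v⟩
    simpa [(Finset.mem_erase.1 hu).1] using hsame
  rw [signedMatchPoly, ← Finset.sum_filter_add_sum_filter_not _ (fun D => ∀ e ∈ D, v ∉ e),
    filter_matchingsIn_avoiding, filter_matchingsIn_covering, Finset.sum_biUnion hdisj,
    Finset.sum_congr rfl fun u hu => sum_matchingsIn_through_edge w hv hu,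
    Finset.sum_neg_distrib, ← sub_eq_add_neg, signedMatchPoly, Finset.mul_sum]
  congr 1
  refine Finset.sum_congr rfl fun D hD => ?_
  have h2 := (mem_matchingsIn.1 hD).two_mul_card_le
  have hcard := Finset.card_erase_add_one hv
  rw [← hcard, show (S.erase v).card + 1 - 2 * D.card = (S.erase v).card - 2 * D.card + 1 by omega,
    pow_succ]
  ring

end SignedMatchPoly

section Interlacing

variable (w : Sym2 V → ℝ)

def StrictlyInterlace (a b : ℕ → ℝ) (n : ℕ) : Prop :=
  ∀ k, k + 1 < n → a k < b k ∧ b k < a (k + 1)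

def sortedRoots (S : Finset V) : ℕ → ℝ := sortedNth (signedMatchPoly w S).roots

variable {w}

theorem neg_one_pow_mul_eval_sortedRoots_erase_pos (hw : ∀ e ∈ completeEdges V, 0 < w e)
    {S : Finset V} {v : V} (hv : v ∈ S)
    (hT : Multiset.card (signedMatchPoly w (S.erase v)).roots = (S.erase v).card)
    (hTu : ∀ u ∈ S.erase v, Multiset.card (signedMatchPoly w ((S.erase v).erase u)).roots =
        ((S.erase v).erase u).card ∧
      StrictlyInterlace (sortedRoots w (S.erase v)) (sortedRoots w ((S.erase v).erase u))
        (S.erase v).card)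
    {j : ℕ} (hj : j < (S.erase v).card) :
    0 < (-1) ^ ((S.erase v).card - j) *
      (signedMatchPoly w S).eval (sortedRoots w (S.erase v) j) := by
  rw [signedMatchPoly_eq_X_mul_sub_sum w hv]
  set T := S.erase v
  set b := sortedRoots w T
  have hbroot : (signedMatchPoly w T).eval (b j) = 0 :=
    (mem_roots'.1 (sortedNth_mem (hT ▸ hj))).2
  have hterm : ∀ u ∈ T, 0 < (-1) ^ (T.card - 1 - j) *
      (w s(u, v) * (signedMatchPoly w (T.erase u)).eval (b j)) := by
    intro u hu
    obtain ⟨hroots, hint⟩ := hTu u hu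
    have hm := Finset.card_erase_add_one hu
    have hwpos : 0 < w s(u, v) := hw _ (by
      simp [completeEdges, Sym2.mk_isDiag_iff, (Finset.mem_erase.1 hu).1])
    have hdeg := natDegree_signedMatchPoly w (T.erase u)
    rw [mul_left_comm]
    refine mul_pos hwpos ?_
    have := neg_one_pow_mul_eval_pos_of_interlace (signedMatchPoly_monic w (T.erase u))
      (hroots.trans hdeg.symm) (b := b) (fun i hi k hk hik => sortedNth_le_sortedNth hik
        (by rw [hT, ← hm, ← hdeg]; exact Nat.lt_succ_of_le hk))
      (fun i hi => hint i (by omega)) (j := j) (by omega)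
    rwa [hdeg, show (T.erase u).card - j = T.card - 1 - j by omega] at this
  simp only [eval_sub, eval_mul, eval_X, eval_finsetSum, eval_C, hbroot, mul_zero, zero_sub]
  rw [show T.card - j = T.card - 1 - j + 1 by omega, pow_succ, mul_neg_one, neg_mul_neg,
    Finset.mul_sum]
  exact Finset.sum_pos hterm (Finset.card_pos.1 (by omega))

theorem card_roots_and_interlace_of_erase (hw : ∀ e ∈ completeEdges V, 0 < w e)
    {S : Finset V} {v : V} (hv : v ∈ S)
    (hT : Multiset.card (signedMatchPoly w (S.erase v)).roots = (S.erase v).card)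
    (hTu : ∀ u ∈ S.erase v, Multiset.card (signedMatchPoly w ((S.erase v).erase u)).roots =
        ((S.erase v).erase u).card ∧
      StrictlyInterlace (sortedRoots w (S.erase v)) (sortedRoots w ((S.erase v).erase u))
        (S.erase v).card) :
    Multiset.card (signedMatchPoly w S).roots = S.card ∧
      StrictlyInterlace (sortedRoots w S) (sortedRoots w (S.erase v)) S.card := by
  have hsign := fun j (hj : j < (S.erase v).card) =>
    neg_one_pow_mul_eval_sortedRoots_erase_pos hw hv hT hTu hj
  set T := S.erase v
  set b := sortedRoots w T
  have hn : T.card + 1 = S.card := Finset.card_erase_add_one hv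
  have hb : ∀ j, j + 1 < T.card → b j < b (j + 1) := fun j hj => by
    obtain ⟨u, hu⟩ := Finset.card_pos.1 (by omega : 0 < T.card)
    exact ((hTu u hu).2 j hj).1.trans ((hTu u hu).2 j hj).2
  obtain ⟨L, hLpos, hLb⟩ : ∃ L, 0 < (signedMatchPoly w S).eval L ∧
      ∑ i ∈ Finset.range T.card, |b i| < L := by
    have hmonic := signedMatchPoly_monic w S
    have htop : Tendsto (fun t => (signedMatchPoly w S).eval t) atTop atTop :=
      tendsto_atTop_of_leadingCoeff_nonneg _
        (by rw [degree_eq_natDegree hmonic.ne_zero, natDegree_signedMatchPoly]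
            exact_mod_cast (by omega : 0 < S.card))
        (by rw [hmonic.leadingCoeff]; exact zero_le_one)
    exact ((htop.eventually_gt_atTop 0).and (eventually_gt_atTop _)).exists
  have hbL : ∀ i < T.card, |b i| < L := fun i hi =>
    (Finset.single_le_sum (fun k _ => abs_nonneg (b k)) (Finset.mem_range.2 hi)).trans_lt hLb
  have hL : 0 < L := (Finset.sum_nonneg fun k _ => abs_nonneg (b k)).trans_lt hLb
  have hbot : 0 < (-1) ^ (T.card + 1) * (signedMatchPoly w S).eval (-L) := by
    rwa [eval_neg_signedMatchPoly, hn, ← mul_assoc, ← pow_add, Even.neg_one_pow ⟨_, rfl⟩,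
      one_mul]
  obtain ⟨x, hxmono, hx, hroots⟩ := exists_roots_interlacing
    ((natDegree_signedMatchPoly w S).trans hn.symm).le hb hsign hL hbL hLpos hbot
  have hsorted : ∀ k < S.card, sortedRoots w S k = x k := fun k hk => by
    rw [sortedRoots, hroots]
    exact sortedNth_map_range hxmono.monotoneOn (by omega)
  refine ⟨by simp [hroots, hn], fun k hk => ?_⟩
  rw [hsorted k (by omega), hsorted (k + 1) hk]
  exact hx k (by omega)

variable (w) in
theorem card_roots_signedMatchPoly_and_interlace (hw : ∀ e ∈ completeEdges V, 0 < w e)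
    (S : Finset V) :
    Multiset.card (signedMatchPoly w S).roots = S.card ∧
      ∀ v ∈ S, StrictlyInterlace (sortedRoots w S) (sortedRoots w (S.erase v)) S.card := by
  induction S using Finset.strongInduction with
  | H S ih =>
  obtain rfl | ⟨v₀, hv₀⟩ := S.eq_empty_or_nonempty
  · simpa using (card_roots' _).trans (natDegree_signedMatchPoly w ∅).le
  have step : ∀ v ∈ S, Multiset.card (signedMatchPoly w S).roots = S.card ∧
      StrictlyInterlace (sortedRoots w S) (sortedRoots w (S.erase v)) S.card := fun v hv =>
    card_roots_and_interlace_of_erase hw hv (ih _ (Finset.erase_ssubset hv)).1 fun u hu =>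
      ⟨(ih _ ((Finset.erase_ssubset hu).trans (Finset.erase_ssubset hv))).1,
        (ih _ (Finset.erase_ssubset hv)).2 u hu⟩
  exact ⟨(step v₀ hv₀).1, fun v hv => (step v hv).2⟩

end Interlacing

section ComplexZeros

theorem neg_I_pow_mul_neg_one_pow_mul_I_pow {n k : ℕ} (h : 2 * k ≤ n) :
    (-Complex.I) ^ n * ((-1) ^ k * Complex.I ^ (n - 2 * k)) = 1 := by
  obtain ⟨r, rfl⟩ : ∃ r, n = r + 2 * k := ⟨n - 2 * k, by omega⟩
  rw [Nat.add_sub_cancel, pow_add, pow_mul, neg_sq]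
  calc (-Complex.I) ^ r * (Complex.I ^ 2) ^ k * ((-1) ^ k * Complex.I ^ r)
      = (-Complex.I ^ 2) ^ (r + k) := by ring
    _ = 1 := by simp [Complex.I_sq]

variable (w : Sym2 V → ℝ)

theorem matchPolyS_eq_comp (S : Finset V) :
    matchPolyS S w = C ((-Complex.I) ^ S.card) *
      ((signedMatchPoly w S).map (algebraMap ℝ ℂ)).comp (C Complex.I * X) := by
  rw [matchPolyS, signedMatchPoly, Polynomial.map_sum, Polynomial.sum_comp, Finset.mul_sum]
  refine Finset.sum_congr rfl fun D hD => ?_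
  simp only [Polynomial.map_mul, Polynomial.map_C, Polynomial.map_pow, Polynomial.map_X,
    mul_comp, C_comp, pow_comp, X_comp, mul_pow]
  rw [← C_pow, ← mul_assoc, ← mul_assoc, ← C_mul, ← C_mul]
  congr 2
  simp only [map_mul, map_pow, map_neg, map_one, map_prod, Complex.coe_algebraMap]
  linear_combination (-∏ e ∈ D, (w e : ℂ)) *
    neg_I_pow_mul_neg_one_pow_mul_I_pow (mem_matchingsIn.1 hD).two_mul_card_le

theorem roots_matchPolyS {S : Finset V}
    (hc : Multiset.card (signedMatchPoly w S).roots = S.card) :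
    (matchPolyS S w).roots = (signedMatchPoly w S).roots.map fun t : ℝ => -Complex.I * t := by
  have hcomp := roots_comp_C_mul_X_add_C ((signedMatchPoly w S).map (algebraMap ℝ ℂ))
    Complex.I 0 (isUnit_iff_ne_zero.2 Complex.I_ne_zero)
  rw [C_0, add_zero] at hcomp
  rw [matchPolyS_eq_comp, roots_C_mul _ (pow_ne_zero _ (neg_ne_zero.2 Complex.I_ne_zero)),
    hcomp, ← roots_map_of_injective_of_card_eq_natDegree (algebraMap ℝ ℂ).injective
      (hc.trans (natDegree_signedMatchPoly w S).symm), Multiset.map_map]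
  simp [Ring.inverse_eq_inv, Complex.inv_I]

theorem sortedRoots_eq_of_roots_matchPolyS {S : Finset V} {n : ℕ} {a : ℕ → ℝ}
    (hc : Multiset.card (signedMatchPoly w S).roots = S.card)
    (ha : (matchPolyS S w).roots =
      Multiset.map (fun k => -Complex.I * (a k : ℂ)) (Finset.range n).val)
    (hmono : ∀ j k, j ≤ k → k < n → a j ≤ a k) {k : ℕ} (hk : k < n) :
    sortedRoots w S k = a k := by
  have hinj : Function.Injective fun t : ℝ => -Complex.I * t := fun s t h => by
    simpa [Complex.I_ne_zero] using h
  have hroots : (signedMatchPoly w S).roots = (Finset.range n).val.map a := by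
    refine Multiset.map_injective hinj ?_
    rw [← roots_matchPolyS w hc, ha, Multiset.map_map]
    rfl
  rw [sortedRoots, hroots]
  exact sortedNth_map_range (fun i _ j hj hij => hmono i j hij hj) hk

end ComplexZeros

/-- strict interlacing of the (purely imaginary) zeros of `Z_G` and
`Z_{G−v}` on the complete graph with strictly positive dimer weights:
`a_1 < a'_1 < a_2 < ⋯ < a'_{N−1} < a_N`. -/
theorem zeros_strictly_interlace (w : Sym2 V → ℝ)
    (hw : ∀ e ∈ completeEdges V, 0 < w e) (v : V) (N : ℕ)
    (hN : Fintype.card V = N) (a a' : ℕ → ℝ)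
    (ha : (matchPolyS Finset.univ w).roots
        = Multiset.map (fun k => -Complex.I * (a k : ℂ)) (Finset.range N).val)
    (ha' : (matchPolyS (Finset.univ.erase v) w).roots
        = Multiset.map (fun k => -Complex.I * (a' k : ℂ)) (Finset.range (N - 1)).val)
    (hmono : ∀ j k, j ≤ k → k < N → a j ≤ a k)
    (hmono' : ∀ j k, j ≤ k → k < N - 1 → a' j ≤ a' k) :
    ∀ k, k + 1 < N → a k < a' k ∧ a' k < a (k + 1) := by
  obtain ⟨hc, hinterlace⟩ := card_roots_signedMatchPoly_and_interlace w hw Finset.univ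
  have hc' := (card_roots_signedMatchPoly_and_interlace w hw (Finset.univ.erase v)).1
  intro k hk
  rw [← sortedRoots_eq_of_roots_matchPolyS w hc ha hmono (by omega : k < N),
    ← sortedRoots_eq_of_roots_matchPolyS w hc ha hmono hk,
    ← sortedRoots_eq_of_roots_matchPolyS w hc' ha' hmono' (by omega : k < N - 1)]
  exact hinterlace v (Finset.mem_univ v) k (by rwa [Finset.card_univ, hN])
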